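/- arXiv:1704.04473 — 7 statements merged into one kernel-verified Lean document; each statement's English description precedes it below -/
import Mathlib

section
/- Every finite simple unweighted undirected graph G on n vertices has an additive 2-spanner with at most 2·n^{3/2} edges. -/
/-!
Greedy clustering. Let `s = ⌊√n⌋`. As long as some vertex `w` has more than `s` neighbours among
the uncovered vertices, make `w` a centre and cover those neighbours. This yields at most
`n / (s + 1) ≤ s` centres, and afterwards every vertex has at most `s` uncovered neighbours. The
spanner keeps every edge at an uncovered vertex (at most `n * s` edges) and a shortest-path tree
from each centre (at most `n * s` edges together). A shortest `u`-`v` path either runs through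
uncovered vertices only, and is kept, or meets a covered vertex `x` adjacent to a centre `c`; the
trees of `c` then give `d_H(u, v) ≤ d(u, c) + d(c, v) ≤ (d(u, x) + 1) + (1 + d(x, v)) = d(u, v) + 2`.
-/

open Finset SimpleGraph

namespace SimpleGraph

variable {V : Type*}

def incidentSubgraph (G : SimpleGraph V) (s : Set V) : SimpleGraph V where
  Adj a b := G.Adj a b ∧ (a ∈ s ∨ b ∈ s)
  symm := ⟨fun _ _ h => ⟨h.1.symm, h.2.symm⟩⟩
  loopless := ⟨fun a h => G.loopless.irrefl a h.1⟩

lemma incidentSubgraph_le (G : SimpleGraph V) (s : Set V) : G.incidentSubgraph s ≤ G :=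
  fun _ _ h => h.1

lemma Reachable.exists_adj_edist_add_one_eq {G : SimpleGraph V} {c v : V} (h : G.Reachable c v)
    (hne : c ≠ v) : ∃ u, G.Adj u v ∧ G.edist c u + 1 = G.edist c v := by
  obtain ⟨p, hp⟩ := h.symm.exists_walk_length_eq_edist
  cases p with
  | nil => exact absurd rfl hne
  | @cons _ u _ hvu q =>
    refine ⟨u, hvu.symm, le_antisymm ?_ ?_⟩
    · calc G.edist c u + 1 ≤ q.length + 1 := by gcongr; rw [edist_comm]; exact edist_le q
        _ = G.edist c v := by rw [edist_comm, ← hp, Walk.length_cons]; push_cast; rfl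
    · calc G.edist c v ≤ G.edist c u + G.edist u v := SimpleGraph.edist_triangle
        _ = G.edist c u + 1 := by rw [edist_eq_one_iff_adj.mpr hvu.symm]

theorem exists_shortestPathTree [Fintype V] (G : SimpleGraph V) (c : V) :
    ∃ T ≤ G, T.edgeSet.ncard ≤ Fintype.card V ∧ ∀ v, T.edist c v ≤ G.edist c v := by
  have : Nonempty V := ⟨c⟩
  choose! parent hparent using fun v (h : G.Reachable c v) (hne : c ≠ v) =>
    h.exists_adj_edist_add_one_eq hne
  -- every vertex at distance `k + 1` from `c` keeps the edge to a parent at distance `k`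
  let T := G ⊓ fromEdgeSet (Set.range fun v => s(v, parent v))
  have hT_dist : ∀ k : ℕ, ∀ v, G.edist c v = k → T.edist c v ≤ k := by
    intro k
    induction k with
    | zero =>
      intro v hv
      rw [Nat.cast_zero, edist_eq_zero_iff] at hv
      simp [hv]
    | succ k ih =>
      intro v hv
      have hreach : G.Reachable c v := edist_ne_top_iff_reachable.mp (by simp [hv])
      have hne : c ≠ v := by
        rintro rfl
        rw [edist_self] at hv
        exact_mod_cast hv
      obtain ⟨hadj, hdist⟩ := hparent v hreach hne
      have hTadj : T.Adj (parent v) v :=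
        ⟨hadj, (fromEdgeSet_adj _).mpr ⟨⟨v, Sym2.eq_swap⟩, hadj.ne⟩⟩
      have hk : G.edist c (parent v) = k := by
        rw [hv, Nat.cast_succ] at hdist
        exact WithTop.add_right_cancel ENat.one_ne_top hdist
      calc T.edist c v ≤ T.edist c (parent v) + T.edist (parent v) v := SimpleGraph.edist_triangle
        _ ≤ k + 1 := by gcongr; exacts [ih _ hk, (edist_eq_one_iff_adj.mpr hTadj).le]
        _ = (k + 1 : ℕ) := by push_cast; rfl
  refine ⟨T, inf_le_left, ?_, fun v => ?_⟩
  · calc T.edgeSet.ncard ≤ (Set.range fun v => s(v, parent v)).ncard :=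
          Set.ncard_le_ncard (by rw [edgeSet_inf, edgeSet_fromEdgeSet]; exact fun e he => he.2.1)
      _ ≤ Fintype.card V := by
          rw [← Set.image_univ, ← Nat.card_eq_fintype_card, ← Set.ncard_univ]
          exact Set.ncard_image_le
  · cases h : G.edist c v using ENat.recTopCoe with
    | top => exact le_top
    | coe k => exact hT_dist k v h

section Counting

variable [Fintype V] [DecidableEq V] (G : SimpleGraph V) [DecidableRel G.Adj]

theorem exists_centers_and_light_remainder (k : ℕ) (U : Finset V) :
    ∃ C R : Finset V, (k + 1) * #C ≤ #U ∧ (∀ x, #(G.neighborFinset x ∩ R) ≤ k) ∧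
      ∀ v ∈ U, v ∉ R → ∃ c ∈ C, G.Adj c v := by
  induction U using Finset.strongInduction with
  | _ U ih =>
    by_cases hheavy : ∃ w, k + 1 ≤ #(G.neighborFinset w ∩ U)
    · obtain ⟨w, hw⟩ := hheavy
      have hsplit := card_sdiff_add_card_inter U (G.neighborFinset w)
      rw [inter_comm] at hsplit
      have hsub : U \ G.neighborFinset w ⊂ U :=
        sdiff_lt_left.mpr (not_disjoint_iff_nonempty_inter.mpr (card_pos.mp (by omega)))
      obtain ⟨C, R, hC, hR, hdom⟩ := ih _ hsub
      refine ⟨insert w C, R, ?_, hR, fun v hv hvR => ?_⟩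
      · calc (k + 1) * #(insert w C) ≤ (k + 1) * (#C + 1) := by gcongr; exact card_insert_le w C
          _ ≤ #U := by linarith
      · by_cases hvw : G.Adj w v
        · exact ⟨w, mem_insert_self w C, hvw⟩
        · obtain ⟨c, hc, hcv⟩ := hdom v (by simpa [hv] using hvw) hvR
          exact ⟨c, mem_insert_of_mem hc, hcv⟩
    · push Not at hheavy
      exact ⟨∅, U, by simp, fun x => Nat.le_of_lt_succ (hheavy x), fun v hv hvU => absurd hv hvU⟩

theorem ncard_edgeSet_incidentSubgraph_le {R : Finset V} {k : ℕ}
    (hR : ∀ x, #(G.neighborFinset x ∩ R) ≤ k) :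
    (G.incidentSubgraph R).edgeSet.ncard ≤ Fintype.card V * k := by
  let darts := univ.sigma fun x => G.neighborFinset x ∩ R
  have hsub : (G.incidentSubgraph R).edgeSet ⊆ (darts.image fun d => s(d.1, d.2) : Finset _) := by
    intro e he
    induction e using Sym2.ind with
    | _ a b =>
      obtain ⟨hab, ha | hb⟩ := he
      · exact mem_image.mpr ⟨⟨b, a⟩, by simpa [darts, hab.symm] using ha, Sym2.eq_swap⟩
      · exact mem_image.mpr ⟨⟨a, b⟩, by simpa [darts, hab] using hb, rfl⟩
  calc (G.incidentSubgraph R).edgeSet.ncard ≤ #(darts.image fun d => s(d.1, d.2)) :=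
        (Set.ncard_le_ncard hsub).trans_eq (Set.ncard_coe_finset _)
    _ ≤ #darts := card_image_le
    _ = ∑ x, #(G.neighborFinset x ∩ R) := card_sigma _ _
    _ ≤ ∑ _x : V, k := sum_le_sum fun x _ => hR x
    _ = Fintype.card V * k := by simp

end Counting

lemma ncard_edgeSet_biSup_le {ι : Type*} (T : ι → SimpleGraph V) (C : Finset ι) :
    (⨆ c ∈ C, T c).edgeSet.ncard ≤ ∑ c ∈ C, (T c).edgeSet.ncard := by
  simp only [edgeSet_iSup]
  exact set_ncard_biUnion_le C _

lemma edist_le_length_of_forall_mem_support {G : SimpleGraph V} {R : Set V} {u v : V}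
    (p : G.Walk u v) (hp : ∀ x ∈ p.support, x ∈ R) :
    (G.incidentSubgraph R).edist u v ≤ p.length := by
  have hedges : ∀ e ∈ p.edges, e ∈ (G.incidentSubgraph R).edgeSet := by
    intro e he
    induction e using Sym2.ind with
    | _ a b => exact ⟨p.adj_of_mem_edges he, .inl (hp a (p.fst_mem_support_of_mem_edges he))⟩
  simpa using edist_le (p.transfer _ hedges)

lemma edist_le_length_add_two_of_adj_mem_support {G H : SimpleGraph V} {c x u v : V}
    (hc : ∀ w, H.edist c w ≤ G.edist c w) (hcx : G.Adj c x) (p : G.Walk u v)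
    (hx : x ∈ p.support) : H.edist u v ≤ p.length + 2 := by
  classical
  have hcu : G.edist c u ≤ 1 + (p.takeUntil x hx).length :=
    calc G.edist c u ≤ G.edist c x + G.edist x u := SimpleGraph.edist_triangle
      _ ≤ 1 + (p.takeUntil x hx).reverse.length := by
          gcongr; exacts [(edist_eq_one_iff_adj.mpr hcx).le, edist_le _]
      _ = 1 + (p.takeUntil x hx).length := by rw [Walk.length_reverse]
  have hcv : G.edist c v ≤ 1 + (p.dropUntil x hx).length :=
    calc G.edist c v ≤ G.edist c x + G.edist x v := SimpleGraph.edist_triangle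
      _ ≤ 1 + (p.dropUntil x hx).length := by
          gcongr; exacts [(edist_eq_one_iff_adj.mpr hcx).le, edist_le _]
  have hlen := congrArg Walk.length (p.take_spec hx)
  rw [Walk.length_append] at hlen
  calc H.edist u v ≤ H.edist u c + H.edist c v := SimpleGraph.edist_triangle
    _ ≤ G.edist c u + G.edist c v := by rw [edist_comm]; exact add_le_add (hc u) (hc v)
    _ ≤ (1 + (p.takeUntil x hx).length) + (1 + (p.dropUntil x hx).length) := add_le_add hcu hcv
    _ = p.length + 2 := by rw [← hlen]; push_cast; ring

end SimpleGraph

lemma natCast_mul_sqrt_le_rpow_three_halves (n : ℕ) : (n * n.sqrt : ℝ) ≤ (n : ℝ) ^ ((3 : ℝ) / 2) := by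
  rw [show (3 : ℝ) / 2 = 1 + 1 / 2 by norm_num, Real.rpow_add' n.cast_nonneg (by norm_num),
    Real.rpow_one, ← Real.sqrt_eq_rpow]
  gcongr
  exact Real.nat_sqrt_le_real_sqrt

/-- Every finite simple unweighted undirected graph `G` on `n` vertices has an additive
`2`-spanner with at most `2 * n^(3/2)` edges: a spanning subgraph `H ≤ G` such that
`d_H(u,v) ≤ d_G(u,v) + 2` for every pair of vertices `u, v` that are connected in `G`. -/
theorem stmt_0 {V : Type*} [Fintype V] (G : SimpleGraph V) :
    ∃ H : SimpleGraph V, H ≤ G ∧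
      (H.edgeSet.ncard : ℝ) ≤ 2 * (Fintype.card V : ℝ) ^ ((3 : ℝ) / 2) ∧
      ∀ u v : V, G.Reachable u v → H.edist u v ≤ G.edist u v + 2 := by
  classical
  set n := Fintype.card V
  obtain ⟨C, R, hC, hR, hdom⟩ := G.exists_centers_and_light_remainder n.sqrt univ
  choose T hTG hT_card hT_dist using G.exists_shortestPathTree
  set H := G.incidentSubgraph R ⊔ ⨆ c ∈ C, T c
  have hTH : ∀ c ∈ C, T c ≤ H := fun c hc => le_sup_of_le_right (le_iSup₂_of_le c hc le_rfl)
  refine ⟨H, sup_le (G.incidentSubgraph_le R) (iSup₂_le fun c _ => hTG c), ?_, fun u v huv => ?_⟩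
  · have hC_card : #C ≤ n.sqrt :=
      Nat.le_of_lt_succ <| Nat.lt_of_mul_lt_mul_left <| hC.trans_lt <| Nat.lt_succ_sqrt n
    have hcount : H.edgeSet.ncard ≤ 2 * (n * n.sqrt) :=
      calc _ ≤ (G.incidentSubgraph R).edgeSet.ncard + (⨆ c ∈ C, T c).edgeSet.ncard := by
            rw [edgeSet_sup]; exact Set.ncard_union_le _ _
        _ ≤ n * n.sqrt + ∑ _c ∈ C, n :=
            add_le_add (G.ncard_edgeSet_incidentSubgraph_le hR)
              ((ncard_edgeSet_biSup_le T C).trans (sum_le_sum fun c _ => hT_card c))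
        _ ≤ 2 * (n * n.sqrt) := by
            rw [sum_const, smul_eq_mul, two_mul, mul_comm #C]; gcongr
    calc (_ : ℝ) ≤ 2 * (n * n.sqrt : ℕ) := by exact_mod_cast hcount
      _ ≤ _ := by push_cast; gcongr; exact natCast_mul_sqrt_le_rpow_three_halves n
  · obtain ⟨p, hp⟩ := huv.exists_walk_length_eq_edist
    rw [← hp]
    by_cases hpR : ∀ x ∈ p.support, x ∈ R
    · exact (edist_anti le_sup_left).trans
        ((edist_le_length_of_forall_mem_support p hpR).trans le_self_add)
    · push Not at hpR
      obtain ⟨x, hx, hxR⟩ := hpR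
      obtain ⟨c, hc, hcx⟩ := hdom x (mem_univ x) hxR
      exact edist_le_length_add_two_of_adj_mem_support
        (fun w => (edist_anti (hTH c hc)).trans (hT_dist c w)) hcx p hx
end

section
/- Every finite simple unweighted undirected graph G on n vertices has an additive 8-spanner with at most 26·n^{4/3} + n edges. -/
/-!
Let `t = ⌊n^(1/3)⌋ + 1` and take a maximal family of vertex-disjoint stars with `t` leaves each.
Every vertex then has fewer than `t` neighbours outside the stars, so keeping the edges that meet
a non-leaf together with the star edges costs at most `n (t - 1) + n` edges, and every edge still
missing has both ends adjacent to one of the at most `n / t ≤ n^(2/3)` centres.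

Among the graphs `H` between this base graph and `G`, take one minimising `|E(H)| + 4 Φ(H)`,
where `Φ(H) ≤ 3 n^(4/3)` sums, over ordered pairs of centres, the excess `d_H - d_G` truncated
at `3`. If two centres `a`, `b` had `d_H(a, b) > d_G(a, b) + 2`, add a shortest `a`-`b` path of
`G`. A centre is adjacent to at most three vertices of that path, so if the path misses more than
three edges of `H` per pair whose excess drops, some centre `p` next to a missing edge sees no
drop towards `a` nor `b`, and the detour through `p` already gives `d_H(a, b) ≤ d_G(a, b) + 2`.
Otherwise the new edges are paid for by the drop of `Φ`, which is positive since the pair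
`(a, b)` itself drops, contradicting minimality. Finally any `u`, `v` are joined in `H` with
excess at most `6`: follow a shortest path up to its first missing edge, pass through the centres
of its first and last missing edges, and follow the path again.
-/

open Finset

namespace Finset

lemma card_filter_prodMk_mem_or_le {α β : Type*} [DecidableEq α] [DecidableEq β]
    (s : Finset α) (D : Finset (α × β)) (a b : β) :
    #{x ∈ s | (x, a) ∈ D ∨ (x, b) ∈ D} ≤ #D := by
  refine card_le_card_of_injOn (fun x => if (x, a) ∈ D then (x, a) else (x, b)) ?_ ?_
  · intro x hx
    have := (mem_filter.1 hx).2
    dsimp only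
    split_ifs with h
    · exact h
    · exact this.resolve_left h
  · intro x _ y _ hxy
    dsimp only at hxy
    split_ifs at hxy <;> exact (Prod.ext_iff.1 hxy).1

lemma sum_add_card_filter_lt_le {ι : Type*} (s : Finset ι) {f g : ι → ℕ}
    (h : ∀ i ∈ s, f i ≤ g i) :
    ∑ i ∈ s, f i + #{i ∈ s | f i < g i} ≤ ∑ i ∈ s, g i := by
  rw [card_filter, ← sum_add_distrib]
  refine sum_le_sum fun i hi => ?_
  have := h i hi
  split_ifs <;> omega

end Finset

namespace SimpleGraph

variable {V : Type*} {G H H' : SimpleGraph V}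

lemma Adj.edist_le_one {u v : V} (h : G.Adj u v) : G.edist u v ≤ 1 :=
  (edist_eq_one_iff_adj.2 h).le

lemma edist_triangle4 {x y z t : V} : G.edist x t ≤ G.edist x y + G.edist y z + G.edist z t :=
  SimpleGraph.edist_triangle.trans (by rw [add_assoc]; gcongr; exact SimpleGraph.edist_triangle)

namespace Walk

variable {u v : V}

lemma edist_getVert_le_of_adj (w : G.Walk u v) {i j : ℕ} (hij : i ≤ j)
    (h : ∀ k, i ≤ k → k < j → H.Adj (w.getVert k) (w.getVert (k + 1))) :
    H.edist (w.getVert i) (w.getVert j) ≤ (j - i : ℕ) := by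
  induction j, hij using Nat.le_induction with
  | base => simp
  | succ j hij ih =>
    calc H.edist (w.getVert i) (w.getVert (j + 1))
        ≤ H.edist (w.getVert i) (w.getVert j) + H.edist (w.getVert j) (w.getVert (j + 1)) :=
          SimpleGraph.edist_triangle
      _ ≤ (j - i : ℕ) + 1 := by
          gcongr
          · exact ih fun k hik hkj => h k hik (by omega)
          · exact (h j hij (by omega)).edist_le_one
      _ = (j + 1 - i : ℕ) := by norm_cast; omega

lemma edist_getVert_eq_of_length_eq (w : G.Walk u v) (hw : w.length = G.edist u v) {i j : ℕ}
    (hij : i ≤ j) (hj : j ≤ w.length) :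
    G.edist (w.getVert i) (w.getVert j) = (j - i : ℕ) := by
  refine le_antisymm
    (w.edist_getVert_le_of_adj hij fun k _ hk => w.adj_getVert_succ (by omega)) ?_
  have hu : G.edist u (w.getVert i) ≤ i := by
    simpa using w.edist_getVert_le_of_adj (Nat.zero_le i) fun k _ hk =>
      w.adj_getVert_succ (by omega)
  have hv : G.edist (w.getVert j) v ≤ (w.length - j : ℕ) := by
    simpa using w.edist_getVert_le_of_adj hj fun k _ hk => w.adj_getVert_succ hk
  have hlen :
      (w.length : ℕ∞) ≤ i + G.edist (w.getVert i) (w.getVert j) + (w.length - j : ℕ) :=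
    calc (w.length : ℕ∞) = G.edist u v := hw
      _ ≤ G.edist u (w.getVert i) + G.edist (w.getVert i) (w.getVert j) +
          G.edist (w.getVert j) v := edist_triangle4
      _ ≤ _ := by gcongr
  generalize G.edist (w.getVert i) (w.getVert j) = d at hlen ⊢
  induction d using ENat.recTopCoe with
  | top => exact le_top
  | coe d => norm_cast at hlen ⊢; omega

lemma card_le_three_of_forall_adj_getVert (w : G.Walk u v) (hw : w.length = G.edist u v)
    {c : V} {s : Finset ℕ} (hs : ∀ i ∈ s, i ≤ w.length)
    (hadj : ∀ i ∈ s, G.Adj c (w.getVert i)) : #s ≤ 3 := by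
  rcases s.eq_empty_or_nonempty with rfl | hne
  · simp
  have hsub : s ⊆ Icc (s.min' hne) (s.min' hne + 2) := by
    intro i hi
    have hmin := s.min'_le i hi
    have hd : G.edist (w.getVert (s.min' hne)) (w.getVert i) ≤ 2 :=
      calc _ ≤ G.edist (w.getVert (s.min' hne)) c + G.edist c (w.getVert i) :=
            SimpleGraph.edist_triangle
        _ ≤ 1 + 1 :=
            add_le_add (hadj _ (s.min'_mem hne)).symm.edist_le_one (hadj i hi).edist_le_one
        _ = 2 := by norm_num
    rw [w.edist_getVert_eq_of_length_eq hw hmin (hs i hi)] at hd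
    have : i - s.min' hne ≤ 2 := by exact_mod_cast hd
    exact mem_Icc.2 ⟨hmin, by omega⟩
  exact (card_le_card hsub).trans (by simp; omega)

lemma card_le_three_mul_card_of_forall_exists_adj (w : G.Walk u v)
    (hw : w.length = G.edist u v) {s : Finset ℕ} (hs : ∀ i ∈ s, i ≤ w.length) {K : Finset V}
    (hK : ∀ i ∈ s, ∃ c ∈ K, G.Adj c (w.getVert i)) : #s ≤ 3 * #K := by
  classical
  have hcover : s ⊆ K.biUnion fun c => {i ∈ s | G.Adj c (w.getVert i)} := fun i hi =>
    have ⟨c, hc, hadj⟩ := hK i hi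
    mem_biUnion.2 ⟨c, hc, mem_filter.2 ⟨hi, hadj⟩⟩
  calc #s ≤ ∑ c ∈ K, #{i ∈ s | G.Adj c (w.getVert i)} :=
        (card_le_card hcover).trans card_biUnion_le
    _ ≤ ∑ _c ∈ K, 3 := sum_le_sum fun c _ => w.card_le_three_of_forall_adj_getVert hw
        (fun i hi => hs i (mem_filter.1 hi).1) (fun i hi => (mem_filter.1 hi).2)
    _ = 3 * #K := by rw [sum_const, smul_eq_mul, mul_comm]

end Walk

namespace AdditiveSpanner

variable {x y : V} {C : Finset V}

/-- `d_H(x, y) - d_G(x, y)` truncated at `3`, counted as the number of `k < 3` with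
`d_G(x, y) + k < d_H(x, y)` so that no subtraction in `ℕ∞` occurs. -/
noncomputable def excess (G H : SimpleGraph V) (x y : V) : ℕ :=
  #((range 3).filter fun k : ℕ => G.edist x y + k < H.edist x y)

lemma excess_le_three : excess G H x y ≤ 3 :=
  (card_filter_le _ _).trans (card_range 3).le

lemma excess_anti (h : H ≤ H') : excess G H' x y ≤ excess G H x y :=
  card_le_card <| monotone_filter_right _ fun _ _ hk => hk.trans_le (edist_anti h)

lemma excess_lt_of_edist_lt (hHH' : H ≤ H') (hH'G : H' ≤ G) (hlt : H'.edist x y < H.edist x y)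
    (hclose : H'.edist x y ≤ G.edist x y + 2) : excess G H' x y < excess G H x y := by
  have hG : G.edist x y ≤ H'.edist x y := edist_anti hH'G
  obtain ⟨m, hm⟩ := ENat.ne_top_iff_exists.1 hlt.ne_top
  obtain ⟨d, hd⟩ := ENat.ne_top_iff_exists.1 (ne_top_of_le_ne_top hlt.ne_top hG)
  rw [← hm, ← hd] at hG hclose
  rw [← hm] at hlt
  have hdm : d ≤ m := by exact_mod_cast hG
  have hmd : m ≤ d + 2 := by exact_mod_cast hclose
  refine card_lt_card <| (ssubset_iff_of_subset (monotone_filter_right _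
    fun _ _ hk => hk.trans_le (edist_anti hHH'))).2 ⟨m - d, ?_, ?_⟩
  · rw [mem_filter, mem_range, ← hd, ← Nat.cast_add, Nat.add_sub_cancel' hdm]
    exact ⟨by omega, hlt⟩
  · rw [mem_filter, ← hd, ← hm, ← Nat.cast_add, Nat.add_sub_cancel' hdm]
    exact fun h => h.2.ne rfl

lemma edist_le_of_excess_le (hHH' : H ≤ H') (hH'G : H' ≤ G)
    (hle : excess G H x y ≤ excess G H' x y) (hclose : H'.edist x y ≤ G.edist x y + 2) :
    H.edist x y ≤ H'.edist x y :=
  le_of_not_gt fun hlt => (excess_lt_of_edist_lt hHH' hH'G hlt hclose).not_ge hle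

noncomputable def totalExcess (G H : SimpleGraph V) (C : Finset V) : ℕ :=
  ∑ p ∈ C ×ˢ C, excess G H p.1 p.2

noncomputable def excessDrops (G H H' : SimpleGraph V) (C : Finset V) : Finset (V × V) :=
  {p ∈ C ×ˢ C | excess G H' p.1 p.2 < excess G H p.1 p.2}

lemma mem_excessDrops {p : V × V} : p ∈ excessDrops G H H' C ↔
    p.1 ∈ C ∧ p.2 ∈ C ∧ excess G H' p.1 p.2 < excess G H p.1 p.2 := by
  rw [excessDrops, mem_filter, mem_product, and_assoc]

lemma totalExcess_le : totalExcess G H C ≤ 3 * #C ^ 2 :=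
  calc totalExcess G H C ≤ ∑ _p ∈ C ×ˢ C, 3 := sum_le_sum fun _ _ => excess_le_three
    _ = 3 * #C ^ 2 := by rw [sum_const, card_product, smul_eq_mul, sq, mul_comm]

lemma totalExcess_add_card_excessDrops_le (h : H ≤ H') :
    totalExcess G H' C + #(excessDrops G H H' C) ≤ totalExcess G H C :=
  sum_add_card_filter_lt_le _ fun _ _ => excess_anti h

open scoped Classical in
noncomputable def missingSteps (H : SimpleGraph V) {u v : V} (w : G.Walk u v) : Finset ℕ :=
  {i ∈ range w.length | ¬H.Adj (w.getVert i) (w.getVert (i + 1))}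

lemma mem_missingSteps {u v : V} {w : G.Walk u v} {i : ℕ} :
    i ∈ missingSteps H w ↔ i < w.length ∧ ¬H.Adj (w.getVert i) (w.getVert (i + 1)) := by
  classical
  rw [missingSteps, mem_filter, mem_range]

lemma ncard_edgeSet_sup_le [Finite V] {u v : V} (w : G.Walk u v) :
    (H ⊔ w.toSubgraph.spanningCoe).edgeSet.ncard ≤ H.edgeSet.ncard + #(missingSteps H w) := by
  classical
  set E := (missingSteps H w).image fun i => s(w.getVert i, w.getVert (i + 1))
  have hsub : (H ⊔ w.toSubgraph.spanningCoe).edgeSet ⊆ H.edgeSet ∪ ↑E := by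
    intro e he
    induction e using Sym2.ind with | _ x y => ?_
    rcases he with hH | hw
    · exact Or.inl hH
    obtain ⟨i, hi, hxy⟩ := w.mk_mem_edges_iff_exists.1 (w.adj_toSubgraph_iff_mem_edges.1 hw)
    rw [← hxy]
    by_cases hadj : H.Adj (w.getVert i) (w.getVert (i + 1))
    · exact Or.inl hadj
    · exact Or.inr (mem_image_of_mem _ (mem_missingSteps.2 ⟨hi, hadj⟩))
  calc _ ≤ (H.edgeSet ∪ ↑E).ncard := Set.ncard_le_ncard hsub (Set.toFinite _)
    _ ≤ H.edgeSet.ncard + #E := by rw [← Set.ncard_coe_finset]; exact Set.ncard_union_le _ _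
    _ ≤ _ := by gcongr; exact card_image_le

def MissingEdgesDominated (G H : SimpleGraph V) (C : Finset V) : Prop :=
  ∀ ⦃x y⦄, G.Adj x y → ¬H.Adj x y → ∃ c ∈ C, H.Adj c x

lemma MissingEdgesDominated.mono (hdom : MissingEdgesDominated G H C) (h : H ≤ H') :
    MissingEdgesDominated G H' C := fun _ _ hxy hn =>
  (hdom hxy fun hH => hn (h hH)).imp fun _ hc => ⟨hc.1, h hc.2⟩

lemma MissingEdgesDominated.exists_adj_getVert {u v : V} (hdom : MissingEdgesDominated G H C)
    {w : G.Walk u v} {i : ℕ} (hi : i ∈ missingSteps H w) :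
    (∃ c ∈ C, H.Adj c (w.getVert i)) ∧ ∃ c ∈ C, H.Adj c (w.getVert (i + 1)) := by
  obtain ⟨hi, hmiss⟩ := mem_missingSteps.1 hi
  exact ⟨hdom (w.adj_getVert_succ hi) hmiss,
    hdom (w.adj_getVert_succ hi).symm fun h => hmiss h.symm⟩

lemma edist_le_of_adj_of_excess_le (hHH' : H ≤ H') (hH'G : H' ≤ G) {p z y : V} (hpz : H.Adj p z)
    {ℓ : ℕ} (hH' : H'.edist z y ≤ ℓ) (hG : ℓ ≤ G.edist z y)
    (hle : excess G H p y ≤ excess G H' p y) : H.edist p y ≤ ℓ + 1 := by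
  have hH'py : H'.edist p y ≤ ℓ + 1 :=
    calc H'.edist p y ≤ H'.edist p z + H'.edist z y := SimpleGraph.edist_triangle
      _ ≤ 1 + ℓ := add_le_add (hHH' hpz).edist_le_one hH'
      _ = ℓ + 1 := add_comm _ _
  have hclose : (ℓ : ℕ∞) + 1 ≤ G.edist p y + 2 :=
    calc (ℓ : ℕ∞) + 1 ≤ G.edist z p + G.edist p y + 1 :=
          add_le_add_left (hG.trans SimpleGraph.edist_triangle) _
      _ ≤ 1 + G.edist p y + 1 := by
          rw [edist_comm]; gcongr; exact (hHH'.trans hH'G hpz).edist_le_one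
      _ = G.edist p y + 2 := by ring
  exact (edist_le_of_excess_le hHH' hH'G hle (hH'py.trans hclose)).trans hH'py

lemma edist_le_add_two_of_adj_getVert (hHG : H ≤ G) {a b c : V} {w : G.Walk a b}
    (hw : w.length = G.edist a b) {i : ℕ} (hi : i ≤ w.length) (hc : H.Adj c (w.getVert i))
    (ha : excess G H c a ≤ excess G (H ⊔ w.toSubgraph.spanningCoe) c a)
    (hb : excess G H c b ≤ excess G (H ⊔ w.toSubgraph.spanningCoe) c b) :
    H.edist a b ≤ G.edist a b + 2 := by
  set H' := H ⊔ w.toSubgraph.spanningCoe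
  have hH'G : H' ≤ G := sup_le hHG (Subgraph.spanningCoe_le _)
  have hpath : ∀ k < w.length, H'.Adj (w.getVert k) (w.getVert (k + 1)) := fun _ hk =>
    Or.inr (w.toSubgraph_adj_getVert hk)
  have hca : H.edist c a ≤ i + 1 := by
    refine edist_le_of_adj_of_excess_le le_sup_left hH'G hc ?_ ?_ ha <;> rw [edist_comm]
    · simpa using w.edist_getVert_le_of_adj (Nat.zero_le i) fun k _ hk => hpath k (by omega)
    · simpa using (w.edist_getVert_eq_of_length_eq hw (Nat.zero_le i) hi).ge
  have hcb : H.edist c b ≤ (w.length - i : ℕ) + 1 := by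
    refine edist_le_of_adj_of_excess_le le_sup_left hH'G hc ?_ ?_ hb
    · simpa using w.edist_getVert_le_of_adj hi fun k _ hk => hpath k hk
    · simpa using (w.edist_getVert_eq_of_length_eq hw hi le_rfl).ge
  calc H.edist a b ≤ H.edist a c + H.edist c b := SimpleGraph.edist_triangle
    _ ≤ (i + 1) + ((w.length - i : ℕ) + 1) := by rw [edist_comm]; gcongr
    _ = G.edist a b + 2 := by rw [← hw]; norm_cast; omega

lemma edist_le_add_two_of_card_excessDrops_lt (hHG : H ≤ G) (hdom : MissingEdgesDominated G H C)
    {a b : V} (ha : a ∈ C) (hb : b ∈ C) {w : G.Walk a b} (hw : w.length = G.edist a b)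
    (hcard : 3 * #(excessDrops G H (H ⊔ w.toSubgraph.spanningCoe) C) < #(missingSteps H w)) :
    H.edist a b ≤ G.edist a b + 2 := by
  classical
  set D := excessDrops G H (H ⊔ w.toSubgraph.spanningCoe) C
  by_contra hfar
  have hK : ∀ i ∈ missingSteps H w,
      ∃ c ∈ {p ∈ C | (p, a) ∈ D ∨ (p, b) ∈ D}, G.Adj c (w.getVert i) := by
    intro i hi
    obtain ⟨c, hc, hadj⟩ := (hdom.exists_adj_getVert hi).1
    refine ⟨c, mem_filter.2 ⟨hc, ?_⟩, hHG hadj⟩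
    by_contra! hno
    refine hfar (edist_le_add_two_of_adj_getVert hHG hw (mem_missingSteps.1 hi).1.le hadj ?_ ?_)
    · exact le_of_not_gt fun h => hno.1 (mem_excessDrops.2 ⟨hc, ha, h⟩)
    · exact le_of_not_gt fun h => hno.2 (mem_excessDrops.2 ⟨hc, hb, h⟩)
  have h1 := w.card_le_three_mul_card_of_forall_exists_adj hw
    (fun i hi => (mem_missingSteps.1 hi).1.le) hK
  have h2 := card_filter_prodMk_mem_or_le C D a b
  omega

/-- The weight `4` exceeds the three missing path edges a single centre can account for. -/
noncomputable def cost (G : SimpleGraph V) (C : Finset V) (H : SimpleGraph V) : ℕ :=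
  H.edgeSet.ncard + 4 * totalExcess G H C

lemma exists_cost_lt_of_edist_gt [Finite V] (hHG : H ≤ G) (hdom : MissingEdgesDominated G H C)
    {a b : V} (ha : a ∈ C) (hb : b ∈ C) (hfar : G.edist a b + 2 < H.edist a b) :
    ∃ H', H ≤ H' ∧ H' ≤ G ∧ cost G C H' < cost G C H := by
  have hreach : G.Reachable a b := reachable_of_edist_ne_top fun htop => by simp [htop] at hfar
  obtain ⟨w, hw⟩ := hreach.exists_walk_length_eq_edist
  set H' := H ⊔ w.toSubgraph.spanningCoe
  have hH'G : H' ≤ G := sup_le hHG (Subgraph.spanningCoe_le _)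
  refine ⟨H', le_sup_left, hH'G, ?_⟩
  have hcard : #(missingSteps H w) ≤ 3 * #(excessDrops G H H' C) :=
    le_of_not_gt fun h => (edist_le_add_two_of_card_excessDrops_lt hHG hdom ha hb hw h).not_gt hfar
  have hH'ab : H'.edist a b ≤ G.edist a b := by
    rw [← hw]
    simpa using w.edist_getVert_le_of_adj (H := H') (Nat.zero_le _) fun k _ hk =>
      Or.inr (w.toSubgraph_adj_getVert hk)
  have hdrop : (a, b) ∈ excessDrops G H H' C := mem_excessDrops.2 ⟨ha, hb,
    excess_lt_of_edist_lt le_sup_left hH'G (hH'ab.trans_lt ((le_self_add).trans_lt hfar))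
      (hH'ab.trans le_self_add)⟩
  have h1 : H'.edgeSet.ncard ≤ H.edgeSet.ncard + #(missingSteps H w) := ncard_edgeSet_sup_le w
  have h2 : totalExcess G H' C + #(excessDrops G H H' C) ≤ totalExcess G H C :=
    totalExcess_add_card_excessDrops_le le_sup_left
  have h3 := card_pos.2 ⟨_, hdrop⟩
  rw [cost, cost]
  omega

lemma edist_le_add_six_of_adj (hHG : H ≤ G)
    (hC : ∀ a ∈ C, ∀ b ∈ C, H.edist a b ≤ G.edist a b + 2) {a b x y : V} (ha : a ∈ C)
    (hb : b ∈ C) (hax : H.Adj a x) (hby : H.Adj b y) : H.edist x y ≤ G.edist x y + 6 := by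
  have hax' := hax.edist_le_one
  have hby' := hby.edist_le_one
  have hGax := (hHG hax).edist_le_one
  have hGby := (hHG hby).edist_le_one
  calc H.edist x y ≤ H.edist x a + H.edist a b + H.edist b y := edist_triangle4
    _ ≤ 1 + (G.edist a b + 2) + 1 := by
        rw [edist_comm (u := x)]; gcongr; exact hC a ha b hb
    _ ≤ 1 + (G.edist a x + G.edist x y + G.edist y b + 2) + 1 := by
        gcongr
        exact edist_triangle4
    _ ≤ 1 + (1 + G.edist x y + 1 + 2) + 1 := by
        rw [edist_comm (u := y)]; gcongr
    _ = G.edist x y + 6 := by ring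

lemma edist_le_add_six (hHG : H ≤ G) (hdom : MissingEdgesDominated G H C)
    (hC : ∀ a ∈ C, ∀ b ∈ C, H.edist a b ≤ G.edist a b + 2) (u v : V) :
    H.edist u v ≤ G.edist u v + 6 := by
  by_cases hreach : G.Reachable u v
  swap
  · simp [edist_eq_top_of_not_reachable hreach]
  obtain ⟨w, hw⟩ := hreach.exists_walk_length_eq_edist
  have hstep : ∀ k < w.length, k ∉ missingSteps H w →
      H.Adj (w.getVert k) (w.getVert (k + 1)) :=
    fun k hk hkM => not_not.1 fun h => hkM (mem_missingSteps.2 ⟨hk, h⟩)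
  rcases (missingSteps H w).eq_empty_or_nonempty with hM | hM
  · have : H.edist u v ≤ w.length := by
      simpa using w.edist_getVert_le_of_adj (Nat.zero_le _) fun k _ hk =>
        hstep k hk (hM ▸ notMem_empty k)
    exact this.trans (hw ▸ le_self_add)
  set i := (missingSteps H w).min' hM
  set j := (missingSteps H w).max' hM
  have hi : i ∈ missingSteps H w := min'_mem _ hM
  have hj : j ∈ missingSteps H w := max'_mem _ hM
  have hij : i ≤ j := min'_le _ _ hj
  have hjlen : j < w.length := (mem_missingSteps.1 hj).1
  obtain ⟨a, ha, hax⟩ := (hdom.exists_adj_getVert hi).1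
  obtain ⟨b, hb, hby⟩ := (hdom.exists_adj_getVert hj).2
  have hu : H.edist u (w.getVert i) ≤ i := by
    simpa using w.edist_getVert_le_of_adj (Nat.zero_le i) fun k _ hk =>
      hstep k (by omega) fun hkM => (min'_le _ _ hkM).not_gt hk
  have hv : H.edist (w.getVert (j + 1)) v ≤ (w.length - (j + 1) : ℕ) := by
    simpa using w.edist_getVert_le_of_adj hjlen fun k hk hk' =>
      hstep k hk' fun hkM => (le_max' _ _ hkM).not_gt hk
  have hG : G.edist (w.getVert i) (w.getVert (j + 1)) ≤ (j + 1 - i : ℕ) :=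
    w.edist_getVert_le_of_adj (by omega) fun k _ hk => w.adj_getVert_succ (by omega)
  calc H.edist u v ≤ H.edist u (w.getVert i) + H.edist (w.getVert i) (w.getVert (j + 1)) +
        H.edist (w.getVert (j + 1)) v := edist_triangle4
    _ ≤ i + ((j + 1 - i : ℕ) + 6) + (w.length - (j + 1) : ℕ) := by
        gcongr
        exact (edist_le_add_six_of_adj hHG hC ha hb hax hby).trans (by gcongr)
    _ = G.edist u v + 6 := by rw [← hw]; norm_cast; omega

theorem exists_spanner_of_missingEdgesDominated [Finite V] {H₀ : SimpleGraph V} {C : Finset V}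
    (hH₀G : H₀ ≤ G) (hdom : MissingEdgesDominated G H₀ C) :
    ∃ H, H ≤ G ∧ H.edgeSet.ncard ≤ H₀.edgeSet.ncard + 12 * #C ^ 2 ∧
      ∀ u v, H.edist u v ≤ G.edist u v + 6 := by
  obtain ⟨H, ⟨hH₀H, hHG⟩, hmin⟩ := Set.exists_min_image {H | H₀ ≤ H ∧ H ≤ G}
    (cost G C) (Set.toFinite _) ⟨H₀, le_rfl, hH₀G⟩
  have hdomH := hdom.mono hH₀H
  have hC : ∀ a ∈ C, ∀ b ∈ C, H.edist a b ≤ G.edist a b + 2 := fun a ha b hb =>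
    le_of_not_gt fun hfar =>
      have ⟨H', hHH', hH'G, hlt⟩ := exists_cost_lt_of_edist_gt hHG hdomH ha hb hfar
      (hmin H' ⟨hH₀H.trans hHH', hH'G⟩).not_gt hlt
  refine ⟨H, hHG, ?_, edist_le_add_six hHG hdomH hC⟩
  have h1 := hmin H₀ ⟨le_rfl, hH₀G⟩
  have h2 : totalExcess G H₀ C ≤ 3 * #C ^ 2 := totalExcess_le
  rw [cost, cost] at h1
  omega

/-- A star is encoded as the pair of its centre and its set of leaves. -/
structure IsStarPacking (G : SimpleGraph V) (t : ℕ) (F : Finset (V × Finset V)) : Prop where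
  card_eq : ∀ s ∈ F, #s.2 = t
  adj : ∀ s ∈ F, ∀ x ∈ s.2, G.Adj s.1 x
  pairwiseDisjoint : (F : Set (V × Finset V)).PairwiseDisjoint Prod.snd

section StarPacking

variable [DecidableEq V] {t : ℕ} {F : Finset (V × Finset V)}

lemma IsStarPacking.card_mul_le [Fintype V] (hF : IsStarPacking G t F) :
    #F * t ≤ Fintype.card V :=
  calc #F * t = ∑ s ∈ F, #s.2 := by rw [sum_congr rfl hF.card_eq, sum_const, smul_eq_mul]
    _ = #(F.biUnion Prod.snd) := (card_biUnion hF.pairwiseDisjoint).symm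
    _ ≤ Fintype.card V := card_le_univ _

lemma exists_isStarPacking [Fintype V] [DecidableRel G.Adj] (ht : 0 < t) :
    ∃ F, IsStarPacking G t F ∧ ∀ v, #(G.neighborFinset v \ F.biUnion Prod.snd) < t := by
  obtain ⟨F, hF, hmax⟩ := Set.exists_max_image {F | IsStarPacking G t F} card (Set.toFinite _)
    ⟨∅, by constructor <;> simp⟩
  refine ⟨F, hF, fun v => not_le.1 fun hle => ?_⟩
  obtain ⟨T, hTsub, hT⟩ := exists_subset_card_eq hle
  have hTfree : ∀ s ∈ F, Disjoint T s.2 := fun s hs => Finset.disjoint_left.2 fun x hxT hxs =>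
    (mem_sdiff.1 (hTsub hxT)).2 (mem_biUnion.2 ⟨s, hs, hxs⟩)
  have hnew : (v, T) ∉ F := fun hvT => by
    obtain ⟨x, hx⟩ := card_pos.1 (hT ▸ ht)
    exact Finset.disjoint_left.1 (hTfree _ hvT) hx hx
  have hins : IsStarPacking G t (insert (v, T) F) := by
    refine ⟨forall_mem_insert _ _ _ |>.2 ⟨hT, hF.card_eq⟩,
      forall_mem_insert _ _ _ |>.2 ⟨fun x hx => ?_, hF.adj⟩, ?_⟩
    · exact (mem_neighborFinset _ _ _).1 (mem_sdiff.1 (hTsub hx)).1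
    · rw [coe_insert]
      exact hF.pairwiseDisjoint.insert fun s hs _ => hTfree s hs
  have := hmax _ hins
  rw [card_insert_of_notMem hnew] at this
  omega

def starEdges (F : Finset (V × Finset V)) : Finset (Sym2 V) :=
  F.biUnion fun s => s.2.image fun x => s(s.1, x)

def edgesIncidentCompl [Fintype V] (G : SimpleGraph V) [DecidableRel G.Adj] (L : Finset V) :
    Finset (Sym2 V) :=
  univ.biUnion fun v => (G.neighborFinset v \ L).image fun x => s(v, x)

lemma IsStarPacking.card_starEdges_le [Fintype V] (hF : IsStarPacking G t F) :
    #(starEdges F) ≤ Fintype.card V :=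
  calc #(starEdges F) ≤ ∑ s ∈ F, #s.2 :=
        card_biUnion_le.trans (sum_le_sum fun _ _ => card_image_le)
    _ = #F * t := by rw [sum_congr rfl hF.card_eq, sum_const, smul_eq_mul]
    _ ≤ Fintype.card V := hF.card_mul_le

lemma card_edgesIncidentCompl_le [Fintype V] [DecidableRel G.Adj] {L : Finset V}
    (h : ∀ v, #(G.neighborFinset v \ L) < t) :
    #(edgesIncidentCompl G L) ≤ Fintype.card V * (t - 1) :=
  calc #(edgesIncidentCompl G L) ≤ ∑ _v : V, (t - 1) :=
        card_biUnion_le.trans (sum_le_sum fun v _ => card_image_le.trans (by have := h v; omega))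
    _ = Fintype.card V * (t - 1) := by rw [sum_const, card_univ, smul_eq_mul]

end StarPacking

lemma exists_sparse_missingEdgesDominated [Fintype V] (G : SimpleGraph V) {t : ℕ} (ht : 0 < t) :
    ∃ (H₀ : SimpleGraph V) (C : Finset V), H₀ ≤ G ∧ MissingEdgesDominated G H₀ C ∧
      #C * t ≤ Fintype.card V ∧
      H₀.edgeSet.ncard ≤ Fintype.card V * (t - 1) + Fintype.card V := by
  classical
  obtain ⟨F, hF, hfree⟩ := exists_isStarPacking (G := G) ht
  set L := F.biUnion Prod.snd
  refine ⟨G ⊓ fromEdgeSet ↑(edgesIncidentCompl G L ∪ starEdges F), F.image Prod.fst,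
    inf_le_left, fun x y hxy hn => ?_,
    (Nat.mul_le_mul_right t card_image_le).trans hF.card_mul_le, ?_⟩
  · by_cases hx : x ∈ L
    · obtain ⟨s, hs, hxs⟩ := mem_biUnion.1 hx
      have hsx := hF.adj s hs x hxs
      refine ⟨s.1, mem_image_of_mem _ hs, hsx, ?_, hsx.ne⟩
      exact mem_coe.2 (mem_union_right _ (mem_biUnion.2 ⟨s, hs, mem_image_of_mem _ hxs⟩))
    · refine absurd ⟨hxy, ?_, hxy.ne⟩ hn
      refine mem_coe.2 (mem_union_left _
        (mem_biUnion.2 ⟨y, mem_univ _, mem_image.2 ⟨x, ?_, ?_⟩⟩))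
      · exact mem_sdiff.2 ⟨(mem_neighborFinset _ _ _).2 hxy.symm, hx⟩
      · exact Sym2.eq_swap
  · calc _ ≤ #(edgesIncidentCompl G L ∪ starEdges F) := by
          rw [← Set.ncard_coe_finset]
          refine Set.ncard_le_ncard ?_ (Set.toFinite _)
          rw [edgeSet_inf, edgeSet_fromEdgeSet]
          exact fun e he => he.2.1
      _ ≤ #(edgesIncidentCompl G L) + #(starEdges F) := card_union_le _ _
      _ ≤ _ := add_le_add (card_edgesIncidentCompl_le hfree) hF.card_starEdges_le

lemma mul_floor_add_sq_le_rpow (n c : ℕ)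
    (hc : c * (⌊(n : ℝ) ^ ((1 : ℝ) / 3)⌋₊ + 1) ≤ n) :
    ((n * ⌊(n : ℝ) ^ ((1 : ℝ) / 3)⌋₊ + 12 * c ^ 2 : ℕ) : ℝ) ≤
      13 * (n : ℝ) ^ ((4 : ℝ) / 3) := by
  set r := (n : ℝ) ^ ((1 : ℝ) / 3) with hr
  have hr0 : 0 ≤ r := by positivity
  have hr3 : (n : ℝ) = r ^ 3 := by
    rw [hr, ← Real.rpow_mul_natCast (Nat.cast_nonneg n)]; norm_num
  have hr4 : (n : ℝ) ^ ((4 : ℝ) / 3) = r ^ 4 := by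
    rw [hr, ← Real.rpow_mul_natCast (Nat.cast_nonneg n)]; norm_num
  have hfloor : (⌊r⌋₊ : ℝ) ≤ r := Nat.floor_le hr0
  have hfloor' : r < ⌊r⌋₊ + 1 := Nat.lt_floor_add_one r
  have hc' : (c : ℝ) * (⌊r⌋₊ + 1) ≤ r ^ 3 := by rw [← hr3]; exact_mod_cast hc
  have hcr : (c : ℝ) ≤ r ^ 2 := by nlinarith [sq_nonneg r]
  push_cast
  rw [hr4, hr3]
  nlinarith [pow_le_pow_left₀ (Nat.cast_nonneg c) hcr 2, pow_nonneg hr0 3]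

end AdditiveSpanner

end SimpleGraph

open SimpleGraph.AdditiveSpanner in
/-- Every finite simple unweighted undirected graph `G` on `n` vertices has an additive
`8`-spanner with at most `26 * n^(4/3) + n` edges: a spanning subgraph `H ≤ G` such that
`d_H(u,v) ≤ d_G(u,v) + 8` for every pair of vertices `u, v` that are connected in `G`. -/
theorem stmt_1 {V : Type*} [Fintype V] (G : SimpleGraph V) :
    ∃ H : SimpleGraph V, H ≤ G ∧
      (H.edgeSet.ncard : ℝ) ≤
        26 * (Fintype.card V : ℝ) ^ ((4 : ℝ) / 3) + (Fintype.card V : ℝ) ∧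
      ∀ u v : V, G.Reachable u v → H.edist u v ≤ G.edist u v + 8 := by
  obtain ⟨H₀, C, hH₀G, hdom, hC, hH₀⟩ := exists_sparse_missingEdgesDominated G
    (Nat.succ_pos ⌊(Fintype.card V : ℝ) ^ ((1 : ℝ) / 3)⌋₊)
  obtain ⟨H, hHG, hH, hstretch⟩ := exists_spanner_of_missingEdgesDominated hH₀G hdom
  refine ⟨H, hHG, ?_, fun u v _ => (hstretch u v).trans (by gcongr; norm_num)⟩
  set n := Fintype.card V
  have hcount : H.edgeSet.ncard ≤ n * ⌊(n : ℝ) ^ ((1 : ℝ) / 3)⌋₊ + 12 * #C ^ 2 + n := by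
    rw [Nat.succ_sub_one] at hH₀
    omega
  have hpow : 0 ≤ (n : ℝ) ^ ((4 : ℝ) / 3) := by positivity
  calc (H.edgeSet.ncard : ℝ)
      ≤ ((n * ⌊(n : ℝ) ^ ((1 : ℝ) / 3)⌋₊ + 12 * #C ^ 2 : ℕ) : ℝ) + n := by
        exact_mod_cast hcount
    _ ≤ 26 * (n : ℝ) ^ ((4 : ℝ) / 3) + n := by linarith [mul_floor_add_sq_le_rpow n #C hC]
end

section
/- Let u_1,…,u_ℓ be a t-clustering of a finite simple unweighted undirected graph G on n vertices. Then the subgraph G_ℓ has at most n·t edges. -/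
open SimpleGraph

/-- The closed neighborhood of a vertex as a `Finset`. -/
def closedNbhd {V : Type*} [Fintype V] [DecidableEq V] (G : SimpleGraph V)
    [DecidableRel G.Adj] (v : V) : Finset V :=
  insert v (G.neighborFinset v)

/-- `clustered G u i` is the union `C_1 ∪ … ∪ C_i` of the first `i` clusters of the
sequence `u` (0-indexed: the clusters of `u 0, …, u (i-1)`).  It equals the union of the
closed neighborhoods of `u 0, …, u (i-1)`. -/
def clustered {V : Type*} [Fintype V] [DecidableEq V] (G : SimpleGraph V)
    [DecidableRel G.Adj] (u : ℕ → V) : ℕ → Finset V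
  | 0 => ∅
  | i + 1 => clustered G u i ∪ closedNbhd G (u i)

/-- The `i`-th cluster `C_i = (Γ_G(u_i) ∪ {u_i}) \ (C_1 ∪ … ∪ C_{i-1})` (0-indexed). -/
def cluster {V : Type*} [Fintype V] [DecidableEq V] (G : SimpleGraph V)
    [DecidableRel G.Adj] (u : ℕ → V) (i : ℕ) : Finset V :=
  closedNbhd G (u i) \ clustered G u i

/-- The graph `G_i`: the subgraph of `G` containing exactly those edges of `G`
whose endpoints do not both lie in `C_1 ∪ … ∪ C_i`. -/
def level {V : Type*} [Fintype V] [DecidableEq V] (G : SimpleGraph V)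
    [DecidableRel G.Adj] (u : ℕ → V) (i : ℕ) : SimpleGraph V where
  Adj a b := G.Adj a b ∧ ¬(a ∈ clustered G u i ∧ b ∈ clustered G u i)
  symm := ⟨fun a b h => ⟨h.1.symm, fun hc => h.2 ⟨hc.2, hc.1⟩⟩⟩
  loopless := ⟨fun a h => G.loopless.irrefl a h.1⟩

/-- `u 0, …, u (ℓ-1)` is a `t`-clustering of `G`:
(i) each `u i` maximizes `|(Γ_G(v) ∪ {v}) \ (C_1 ∪ … ∪ C_{i-1})|` over all vertices `v`,
(ii) every cluster `C_i` has at least `t` vertices, and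
(iii) for every vertex `v`, `|(Γ_G(v) ∪ {v}) \ (C_1 ∪ … ∪ C_ℓ)| < t`. -/
def IsClustering {V : Type*} [Fintype V] [DecidableEq V] (G : SimpleGraph V)
    [DecidableRel G.Adj] (t ℓ : ℕ) (u : ℕ → V) : Prop :=
  (∀ i < ℓ, ∀ v : V,
      (closedNbhd G v \ clustered G u i).card ≤ (cluster G u i).card) ∧
  (∀ i < ℓ, t ≤ (cluster G u i).card) ∧
  (∀ v : V, (closedNbhd G v \ clustered G u ℓ).card < t)

open Finset

/-! Every edge of `G_ℓ` has an endpoint outside `S = C_1 ∪ … ∪ C_ℓ`; orienting it towards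
such an endpoint charges it to a pair `(a, b)` with `b ∈ Γ_G(a) \ S`. By (iii) each vertex `a`
receives fewer than `t` charges, so there are at most `n·t` edges. -/

lemma card_edgeFinset_le_sum_card_neighborFinset_sdiff {V : Type*} [Fintype V] [DecidableEq V]
    {G H : SimpleGraph V} [DecidableRel G.Adj] [Fintype H.edgeSet] (hHG : H ≤ G)
    (S : Finset V) (hS : ∀ a b, H.Adj a b → a ∉ S ∨ b ∉ S) :
    #H.edgeFinset ≤ ∑ a, #(G.neighborFinset a \ S) := by
  have hcover : H.edgeFinset ⊆
      (univ.sigma fun a => G.neighborFinset a \ S).image fun p => s(p.1, p.2) := by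
    intro e he
    induction e using Sym2.ind with
    | _ a b =>
      have hab : H.Adj a b := mem_edgeFinset.1 he
      simp only [Finset.mem_image, Finset.mem_sigma, Finset.mem_univ, true_and, Finset.mem_sdiff,
        mem_neighborFinset, Sigma.exists]
      rcases hS a b hab with ha | hb
      · exact ⟨b, a, ⟨(hHG hab).symm, ha⟩, Sym2.eq_swap⟩
      · exact ⟨a, b, ⟨hHG hab, hb⟩, rfl⟩
  calc #H.edgeFinset ≤ #((univ.sigma fun a => G.neighborFinset a \ S).image _) :=
        card_le_card hcover
    _ ≤ _ := card_image_le
    _ = ∑ a, #(G.neighborFinset a \ S) := card_sigma _ _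

/-- If `u 0, …, u (ℓ-1)` is a `t`-clustering of a finite graph `G` on `n` vertices, then
the subgraph `G_ℓ` has at most `n * t` edges. -/
theorem stmt_2 {V : Type*} [Fintype V] [DecidableEq V] (G : SimpleGraph V)
    [DecidableRel G.Adj] (t ℓ : ℕ) (u : ℕ → V) (h : IsClustering G t ℓ u) :
    (level G u ℓ).edgeSet.ncard ≤ Fintype.card V * t := by
  classical
  rw [← coe_edgeFinset, Set.ncard_coe_finset]
  calc #(level G u ℓ).edgeFinset
      ≤ ∑ a, #(G.neighborFinset a \ clustered G u ℓ) :=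
        card_edgeFinset_le_sum_card_neighborFinset_sdiff (H := level G u ℓ)
          (fun _ _ hab => hab.1) _ fun _ _ hab => not_and_or.1 hab.2
    _ ≤ ∑ _a : V, t := sum_le_sum fun a _ =>
        (card_le_card (sdiff_subset_sdiff (subset_insert a _) subset_rfl)).trans (h.2.2 a).le
    _ = Fintype.card V * t := by rw [sum_const, card_univ, smul_eq_mul]
end

section
/- Let u_1,…,u_ℓ be a t-clustering of a finite simple unweighted undirected graph G, and let u, v be vertices of G such that some shortest path from u to v in G is not contained in the subgraph G_ℓ. Then there exists an index i ∈ {1,…,ℓ} such that d_{G_{i-1}}(u_i,u) + d_{G_{i-1}}(u_i,v) ≤ d_G(u,v) + 2 (in particular, u and v are both reachable from u_i in G_{i-1}). -/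
open SimpleGraph

/-! Let `i` be the first index for which the shortest path `p` from `a` to `b` is not contained
in `G_{i+1}`. Then `p` lies in `G_i` and has an edge `xy` whose ends both lie in
`C_1 ∪ … ∪ C_{i+1}` but not both in `C_1 ∪ … ∪ C_i`; so one end lies in `C_{i+1}` and hence
`d_{G_i}(u_{i+1}, x) + d_{G_i}(u_{i+1}, y) ≤ 3`. Going from `u_{i+1}` to `a` and `b` through `x`
and `y` along `p` costs at most `|p| - 1` more. -/

namespace SimpleGraph.Walk

variable {V : Type*} {H : SimpleGraph V} {a b : V}

lemma edist_add_edist_getVert_succ_add_one_le_length (p : H.Walk a b) {i : ℕ}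
    (hi : i < p.length) :
    H.edist a (p.getVert i) + H.edist (p.getVert (i + 1)) b + 1 ≤ p.length := by
  have hl : i + (p.length - (i + 1)) + 1 = p.length := by omega
  calc H.edist a (p.getVert i) + H.edist (p.getVert (i + 1)) b + 1
      ≤ (p.take i).length + (p.drop (i + 1)).length + 1 := by
        gcongr <;> exact edist_le _
    _ = p.length := by
        rw [take_length, drop_length, min_eq_left hi.le]; exact_mod_cast hl

lemma edist_add_edist_le_length_add_of_mem_edges (p : H.Walk a b) {x y c : V} {k : ℕ∞}
    (hxy : s(x, y) ∈ p.edges) (hc : H.edist c x + H.edist c y ≤ k + 1) :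
    H.edist c a + H.edist c b ≤ p.length + k := by
  obtain ⟨i, hi, hedge⟩ := p.mk_mem_edges_iff_exists.1 hxy
  set x' := p.getVert i
  set y' := p.getVert (i + 1)
  have hc' : H.edist c x' + H.edist c y' ≤ k + 1 := by
    rcases Sym2.eq_iff.1 hedge with ⟨hx, hy⟩ | ⟨hx, hy⟩ <;> rw [hx, hy]
    · exact hc
    · rwa [add_comm]
  calc H.edist c a + H.edist c b
      ≤ (H.edist c x' + H.edist x' a) + (H.edist c y' + H.edist y' b) :=
        add_le_add H.edist_triangle H.edist_triangle
    _ = (H.edist c x' + H.edist c y') + (H.edist a x' + H.edist y' b) := by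
        rw [edist_comm (u := x')]; ring
    _ ≤ (k + 1) + (H.edist a x' + H.edist y' b) := by gcongr
    _ = k + (H.edist a x' + H.edist y' b + 1) := by ring
    _ ≤ k + p.length := by gcongr; exact p.edist_add_edist_getVert_succ_add_one_le_length hi
    _ = p.length + k := add_comm _ _

lemma exists_edges_subset_and_not_subset_succ {F : ℕ → SimpleGraph V} (hF : Antitone F)
    (p : H.Walk a b) (h0 : ∀ e ∈ p.edges, e ∈ (F 0).edgeSet) {ℓ : ℕ}
    (hℓ : ∃ e ∈ p.edges, e ∉ (F ℓ).edgeSet) :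
    ∃ i < ℓ, (∀ e ∈ p.edges, e ∈ (F i).edgeSet) ∧ ∃ e ∈ p.edges, e ∉ (F (i + 1)).edgeSet := by
  obtain ⟨i, hi, hsucc⟩ := Nat.exists_not_and_succ_of_not_zero_of_exists
    (p := fun j ↦ ∃ e ∈ p.edges, e ∉ (F j).edgeSet) (by simpa using h0) ⟨ℓ, hℓ⟩
  push Not at hi
  refine ⟨i, lt_of_not_ge fun hℓi ↦ ?_, hi, hsucc⟩
  obtain ⟨e, he, heℓ⟩ := hℓ
  exact heℓ (edgeSet_mono (hF hℓi) (hi e he))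

end SimpleGraph.Walk

section Clustering

variable {V : Type*} [Fintype V] [DecidableEq V] {G : SimpleGraph V} [DecidableRel G.Adj]
  {u : ℕ → V} {i : ℕ}

lemma level_adj {x y : V} :
    (level G u i).Adj x y ↔ G.Adj x y ∧ ¬(x ∈ clustered G u i ∧ y ∈ clustered G u i) :=
  Iff.rfl

lemma clustered_mono : Monotone (clustered G u) :=
  monotone_nat_of_le_succ fun _ ↦ Finset.subset_union_left

lemma mem_cluster_of_mem_clustered_succ {z : V} (hz : z ∈ clustered G u (i + 1))
    (hz' : z ∉ clustered G u i) : z ∈ cluster G u i :=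
  Finset.mem_sdiff.2 ⟨(Finset.mem_union.1 hz).resolve_left hz', hz'⟩

lemma level_zero : level G u 0 = G := by
  ext x y
  simp [level, clustered]

lemma level_antitone : Antitone (level G u) := fun _ _ hij _ _ hxy ↦
  ⟨hxy.1, fun hc ↦ hxy.2 ⟨clustered_mono hij hc.1, clustered_mono hij hc.2⟩⟩

lemma edist_level_le_one_of_mem_cluster {z : V} (hz : z ∈ cluster G u i) :
    (level G u i).edist (u i) z ≤ 1 := by
  obtain ⟨hzN, hzC⟩ := Finset.mem_sdiff.1 hz
  rcases Finset.mem_insert.1 hzN with rfl | hadj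
  · simp
  · refine (edist_eq_one_iff_adj.2 (level_adj.2 ⟨?_, fun h ↦ hzC h.2⟩)).le
    exact (mem_neighborFinset _ _ _).1 hadj

lemma edist_level_add_edist_le_three_of_mem_cluster {z w : V}
    (hz : z ∈ cluster G u i) (hzw : (level G u i).Adj z w) :
    (level G u i).edist (u i) z + (level G u i).edist (u i) w ≤ 3 := by
  have hz1 := edist_level_le_one_of_mem_cluster hz
  calc (level G u i).edist (u i) z + (level G u i).edist (u i) w
      ≤ (level G u i).edist (u i) z + ((level G u i).edist (u i) z + 1) := by
        gcongr
        exact SimpleGraph.edist_triangle.trans (by rw [edist_eq_one_iff_adj.2 hzw])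
    _ ≤ 1 + (1 + 1) := by gcongr
    _ = 3 := by norm_num

lemma edist_level_add_edist_le_three {x y : V} (hxy : (level G u i).Adj x y)
    (hxy' : ¬(level G u (i + 1)).Adj x y) :
    (level G u i).edist (u i) x + (level G u i).edist (u i) y ≤ 3 := by
  have hboth : x ∈ clustered G u (i + 1) ∧ y ∈ clustered G u (i + 1) := by
    by_contra h
    exact hxy' (level_adj.2 ⟨hxy.1, h⟩)
  by_cases hx : x ∈ clustered G u i
  · rw [add_comm]
    refine edist_level_add_edist_le_three_of_mem_cluster ?_ hxy.symm
    exact mem_cluster_of_mem_clustered_succ hboth.2 fun hy ↦ hxy.2 ⟨hx, hy⟩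
  · exact edist_level_add_edist_le_three_of_mem_cluster
      (mem_cluster_of_mem_clustered_succ hboth.1 hx) hxy

end Clustering

-- Indices are shifted by one: `u i` is the paper's `u_{i+1}` and `level G u i` its `G_i`.
theorem stmt_4_general {V : Type*} [Fintype V] [DecidableEq V] (G : SimpleGraph V)
    [DecidableRel G.Adj] (ℓ : ℕ) (u : ℕ → V)
    (a b : V)
    (hp : ∃ p : G.Walk a b, p.IsPath ∧ p.length = G.dist a b ∧
      ∃ e ∈ p.edges, e ∉ (level G u ℓ).edgeSet) :
    ∃ i < ℓ, (level G u i).edist (u i) a + (level G u i).edist (u i) b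
      ≤ G.edist a b + 2 := by
  obtain ⟨p, -, hlen, hout⟩ := hp
  have hG : ∀ e ∈ p.edges, e ∈ (level G u 0).edgeSet := by
    simpa [level_zero] using fun e he ↦ p.edges_subset_edgeSet he
  obtain ⟨i, hiℓ, hin, ⟨x, y⟩, hxy, hxy'⟩ :=
    p.exists_edges_subset_and_not_subset_succ level_antitone hG hout
  have hlen' : (p.length : ℕ∞) = G.edist a b := by
    rw [hlen, Reachable.coe_dist_eq_edist ⟨p⟩]
  refine ⟨i, hiℓ, ?_⟩
  rw [← hlen', ← p.length_transfer hin]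
  refine (p.transfer _ hin).edist_add_edist_le_length_add_of_mem_edges
    (by rwa [Walk.edges_transfer]) ?_
  exact edist_level_add_edist_le_three (hin _ hxy) hxy'

/-- Let `u 0, …, u (ℓ-1)` be a `t`-clustering of a finite graph `G` and let `a`, `b` be
vertices such that some shortest path from `a` to `b` in `G` is not contained in the
subgraph `G_ℓ`.  Then there is an index `i ∈ {1,…,ℓ}` (0-indexed below, so that the
center `u_i` is `u i` and the graph `G_{i-1}` is `level G u i`) with
`d_{G_{i-1}}(u_i,a) + d_{G_{i-1}}(u_i,b) ≤ d_G(a,b) + 2`; the extended distances (`ℕ∞`)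
in particular force `a` and `b` to be reachable from `u i` in that subgraph. -/
theorem stmt_4 {V : Type*} [Fintype V] [DecidableEq V] (G : SimpleGraph V)
    [DecidableRel G.Adj] (t ℓ : ℕ) (u : ℕ → V) (h : IsClustering G t ℓ u)
    (a b : V)
    (hp : ∃ p : G.Walk a b, p.IsPath ∧ p.length = G.dist a b ∧
      ∃ e ∈ p.edges, e ∉ (level G u ℓ).edgeSet) :
    ∃ i < ℓ, (level G u i).edist (u i) a + (level G u i).edist (u i) b
      ≤ G.edist a b + 2 :=
  stmt_4_general G ℓ u a b hp
end

section
/- Let u_1,…,u_ℓ be a t-clustering of a finite simple unweighted undirected graph G, and for indices i, j ∈ {1,…,ℓ} define δ_{i,j} = min over k ∈ {1,…,ℓ} of (d_{G_{k-1}}(u_k,u_i) + d_{G_{k-1}}(u_k,u_j)). Then for all i, j such that u_i and u_j are connected in G: d_G(u_i,u_j) ≤ δ_{i,j} ≤ d_G(u_i,u_j) + 2. -/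
open SimpleGraph

/-!
The lower bound is the triangle inequality through `u k`, since every `G_k` is a subgraph
of `G`. For the upper bound, take a shortest `u_i`–`u_j` path `p` in `G` and let `k` be the
first index whose closed neighbourhood meets `p`; `k ≤ i` because `u_i` lies on `p`. No
vertex of `p` lies in `C_1 ∪ … ∪ C_{k-1}`, so `p` survives in `G_{k-1}`, and `u_k` is at
distance at most one from some vertex `w` of `p`. Splitting `p` at `w` gives
`δ_{i,j} ≤ (1 + d(w, u_i)) + (1 + d(w, u_j)) ≤ |p| + 2`.
-/

namespace SimpleGraph

variable {V : Type*} {G H : SimpleGraph V}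

lemma edist_le_edist_add_edist_of_le (hHG : H ≤ G) (a b c : V) :
    G.edist a b ≤ H.edist c a + H.edist c b :=
  calc G.edist a b ≤ G.edist a c + G.edist c b := G.edist_triangle
    _ = G.edist c a + G.edist c b := by rw [edist_comm]
    _ ≤ H.edist c a + H.edist c b := add_le_add (edist_anti hHG) (edist_anti hHG)

namespace Walk

lemma edist_le_length_of_edges_subset {x y : V} (p : G.Walk x y)
    (hp : ∀ e ∈ p.edges, e ∈ H.edgeSet) : H.edist x y ≤ p.length := by
  simpa using edist_le (p.transfer H hp)

lemma edist_add_edist_le_length_add_two [DecidableEq V] {x y c w : V} (p : G.Walk x y)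
    (hp : ∀ e ∈ p.edges, e ∈ H.edgeSet) (hw : w ∈ p.support) (hc : H.edist c w ≤ 1) :
    H.edist c x + H.edist c y ≤ p.length + 2 := by
  set q := p.takeUntil w hw
  set r := p.dropUntil w hw
  have hq : H.edist w x ≤ q.length := by
    rw [edist_comm]
    exact q.edist_le_length_of_edges_subset fun e he =>
      hp e (p.edges_takeUntil_subset_edges hw he)
  have hr : H.edist w y ≤ r.length :=
    r.edist_le_length_of_edges_subset fun e he => hp e (p.edges_dropUntil_subset_edges hw he)
  have hlen : q.length + r.length = p.length := by
    rw [← length_append, take_spec]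
  calc H.edist c x + H.edist c y
      ≤ (H.edist c w + H.edist w x) + (H.edist c w + H.edist w y) :=
        add_le_add H.edist_triangle H.edist_triangle
    _ ≤ (1 + q.length) + (1 + r.length) := by gcongr
    _ = p.length + 2 := by rw [← hlen]; push_cast; ring

end Walk

end SimpleGraph

section Clustering

variable {V : Type*} [Fintype V] [DecidableEq V] {G : SimpleGraph V} [DecidableRel G.Adj]
  {u : ℕ → V}

lemma mem_clustered_iff {k : ℕ} {v : V} :
    v ∈ clustered G u k ↔ ∃ m < k, v ∈ closedNbhd G (u m) := by
  induction k with
  | zero => simp [clustered]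
  | succ k ih =>
    simp only [clustered, Finset.mem_union, ih, Nat.lt_succ_iff_lt_or_eq]
    constructor
    · rintro (⟨m, hm, hv⟩ | hv)
      exacts [⟨m, .inl hm, hv⟩, ⟨k, .inr rfl, hv⟩]
    · rintro ⟨m, hm | rfl, hv⟩
      exacts [.inl ⟨m, hm, hv⟩, .inr hv]

lemma level_le (k : ℕ) : level G u k ≤ G :=
  fun _ _ h => h.1

lemma level_adj_of_notMem_left {k : ℕ} {a b : V} (hab : G.Adj a b)
    (ha : a ∉ clustered G u k) : (level G u k).Adj a b :=
  ⟨hab, fun h => ha h.1⟩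

lemma edist_level_le_one {k : ℕ} {w : V} (hw : w ∈ closedNbhd G (u k))
    (hw' : w ∉ clustered G u k) : (level G u k).edist (u k) w ≤ 1 := by
  rcases Finset.mem_insert.mp hw with rfl | hadj
  · simp
  · exact (edist_eq_one_iff_adj.mpr
      (level_adj_of_notMem_left ((G.mem_neighborFinset _ _).mp hadj).symm hw').symm).le

lemma edges_subset_level {k : ℕ} {x y : V} (p : G.Walk x y)
    (hp : ∀ v ∈ p.support, v ∉ clustered G u k) :
    ∀ e ∈ p.edges, e ∈ (level G u k).edgeSet := by
  intro e he
  induction e using Sym2.ind with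
  | _ a b =>
    exact level_adj_of_notMem_left (p.edges_subset_edgeSet he)
      (hp a (p.fst_mem_support_of_mem_edges he))

lemma exists_level_edist_add_edist_le {i : ℕ} {y : V} (p : G.Walk (u i) y) :
    ∃ k ≤ i,
      (level G u k).edist (u k) (u i) + (level G u k).edist (u k) y ≤ p.length + 2 := by
  have hi : ∃ w ∈ p.support, w ∈ closedNbhd G (u i) :=
    ⟨u i, p.start_mem_support, Finset.mem_insert_self _ _⟩
  have hex : ∃ k, ∃ w ∈ p.support, w ∈ closedNbhd G (u k) := ⟨i, hi⟩
  obtain ⟨w, hw, hwk⟩ := Nat.find_spec hex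
  have hfree : ∀ v ∈ p.support, v ∉ clustered G u (Nat.find hex) := by
    intro v hv hvc
    obtain ⟨m, hm, hvm⟩ := mem_clustered_iff.mp hvc
    exact Nat.find_min hex hm ⟨v, hv, hvm⟩
  exact ⟨Nat.find hex, Nat.find_le hi,
    p.edist_add_edist_le_length_add_two (edges_subset_level p hfree) hw
      (edist_level_le_one hwk (hfree w hw))⟩

end Clustering

theorem stmt_7_general {V : Type*} [Fintype V] [DecidableEq V] (G : SimpleGraph V)
    [DecidableRel G.Adj] (ℓ : ℕ) (u : ℕ → V) :
    ∀ i < ℓ, ∀ j < ℓ, G.Reachable (u i) (u j) →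
      G.edist (u i) (u j) ≤
        (Finset.range ℓ).inf
          (fun k => (level G u k).edist (u k) (u i) + (level G u k).edist (u k) (u j)) ∧
      (Finset.range ℓ).inf
          (fun k => (level G u k).edist (u k) (u i) + (level G u k).edist (u k) (u j))
        ≤ G.edist (u i) (u j) + 2 := by
  intro i hi j _ hreach
  refine ⟨Finset.le_inf fun k _ => edist_le_edist_add_edist_of_le (level_le k) _ _ _, ?_⟩
  obtain ⟨p, hp⟩ := hreach.exists_walk_length_eq_edist
  obtain ⟨k, hki, hk⟩ := exists_level_edist_add_edist_le p
  rw [← hp]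
  exact (Finset.inf_le (Finset.mem_range.mpr (hki.trans_lt hi))).trans hk

/-- Let `u 0, …, u (ℓ-1)` be a `t`-clustering of a finite graph `G` and define
`δ_{i,j} = min_{k} (d_{G_{k-1}}(u_k, u_i) + d_{G_{k-1}}(u_k, u_j))` (0-indexed: the
minimum over `k < ℓ` of distances in `level G u k`).  Then for all `i, j` such that
`u i` and `u j` are connected in `G` we have
`d_G(u i, u j) ≤ δ_{i,j} ≤ d_G(u i, u j) + 2`. -/
theorem stmt_7 {V : Type*} [Fintype V] [DecidableEq V] (G : SimpleGraph V)
    [DecidableRel G.Adj] (t ℓ : ℕ) (u : ℕ → V) (h : IsClustering G t ℓ u) :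
    ∀ i < ℓ, ∀ j < ℓ, G.Reachable (u i) (u j) →
      G.edist (u i) (u j) ≤
        (Finset.range ℓ).inf
          (fun k => (level G u k).edist (u k) (u i) + (level G u k).edist (u k) (u j)) ∧
      (Finset.range ℓ).inf
          (fun k => (level G u k).edist (u k) (u i) + (level G u k).edist (u k) (u j))
        ≤ G.edist (u i) (u j) + 2 :=
  stmt_7_general G ℓ u
end

section
/- Let G be a finite simple unweighted undirected graph, let u, v be vertices of G, and let p be a path from u to v in G whose length is at most d_G(u,v) + 2. Let S be a set of vertices lying on p such that any two vertices of S are at distance at most 2 in G. Then |S| ≤ 5. -/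
/-!
Index the vertices of `p` by their first position on `p`. If `x` comes before `y`, then cutting
`p` at `x` and `y` and splicing in a geodesic from `x` to `y` gives a walk from `a` to `b`, so
`d(a,b) ≤ idx x + d(x,y) + (|p| - idx y)`. With `|p| ≤ d(a,b) + 2` and `d(x,y) ≤ 2` the
indices of `S` therefore lie in an interval of length `4`, which holds at most `5` of them.
-/

open SimpleGraph

theorem Finset.card_le_of_forall_le_add {α : Type*} {s : Finset α} {f : α → ℕ} {k : ℕ}
    (hf : Set.InjOn f s) (h : ∀ x ∈ s, ∀ y ∈ s, f y ≤ f x + k) : s.card ≤ k + 1 := by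
  rcases s.eq_empty_or_nonempty with rfl | hs
  · simp
  obtain ⟨x, hx, hmin⟩ := s.exists_min_image f hs
  have hsub : s.image f ⊆ Finset.Icc (f x) (f x + k) := by
    simp only [Finset.image_subset_iff, Finset.mem_Icc]
    exact fun y hy => ⟨hmin y hy, h x hx y hy⟩
  calc s.card = (s.image f).card := (Finset.card_image_of_injOn hf).symm
    _ ≤ (Finset.Icc (f x) (f x + k)).card := Finset.card_le_card hsub
    _ = k + 1 := by rw [Nat.card_Icc]; omega

theorem SimpleGraph.dist_le_of_edist_le {V : Type*} {G : SimpleGraph V} {u v : V} {n : ℕ}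
    (h : G.edist u v ≤ n) : G.dist u v ≤ n := by
  have := ENat.toNat_le_toNat h (ENat.natCast_ne_top n)
  rwa [ENat.toNat_natCast] at this

namespace SimpleGraph.Walk

variable {V : Type*} [DecidableEq V] {G : SimpleGraph V} {a b x y : V}

theorem dist_le_idxOf_add_dist_add_length_sub_idxOf (p : G.Walk a b) (hx : x ∈ p.support)
    (hy : y ∈ p.support) :
    G.dist a b ≤ p.support.idxOf x + G.dist x y + (p.length - p.support.idxOf y) := by
  have hxy : G.Reachable x y :=
    (p.dropUntil x hx).reachable.trans (p.dropUntil y hy).reachable.symm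
  obtain ⟨w, hw⟩ := hxy.exists_walk_length_eq_dist
  have := dist_le ((p.takeUntil x hx).append (w.append (p.dropUntil y hy)))
  simpa only [length_append, length_takeUntil, length_dropUntil, hw, add_assoc] using this

theorem idxOf_le_idxOf_add_dist_add {k : ℕ} (p : G.Walk a b) (hp : p.length ≤ G.dist a b + k)
    (hx : x ∈ p.support) (hy : y ∈ p.support) :
    p.support.idxOf y ≤ p.support.idxOf x + G.dist x y + k := by
  have hdist := p.dist_le_idxOf_add_dist_add_length_sub_idxOf hx hy
  have hy_le : p.support.idxOf y ≤ p.length :=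
    length_takeUntil p hy ▸ p.length_takeUntil_le_length hy
  omega

end SimpleGraph.Walk

theorem stmt_8_general {V : Type*} (G : SimpleGraph V)
    (a b : V) (p : G.Walk a b)
    (hlen : p.length ≤ G.dist a b + 2)
    (S : Finset V) (hS : ∀ x ∈ S, x ∈ p.support)
    (hdist : ∀ x ∈ S, ∀ y ∈ S, G.edist x y ≤ 2) :
    S.card ≤ 5 := by
  classical
  have hinj : Set.InjOn p.support.idxOf S := fun x hx y hy hxy =>
    (List.idxOf_inj (hS x hx)).mp hxy
  refine Finset.card_le_of_forall_le_add (k := 4) hinj fun x hx y hy => ?_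
  have hxy : G.dist x y ≤ 2 := dist_le_of_edist_le (hdist x hx y hy)
  have := p.idxOf_le_idxOf_add_dist_add hlen (hS x hx) (hS y hy)
  omega

/-- Let `G` be a finite simple graph, `a`, `b` vertices, and `p` a path from `a` to `b`
in `G` whose length is at most `d_G(a,b) + 2`.  If `S` is a set of vertices lying on `p`
such that any two vertices of `S` are at distance at most `2` in `G`, then `|S| ≤ 5`. -/
theorem stmt_8 {V : Type*} [Fintype V] [DecidableEq V] (G : SimpleGraph V)
    (a b : V) (p : G.Walk a b) (hpath : p.IsPath)
    (hlen : p.length ≤ G.dist a b + 2)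
    (S : Finset V) (hS : ∀ x ∈ S, x ∈ p.support)
    (hdist : ∀ x ∈ S, ∀ y ∈ S, G.edist x y ≤ 2) :
    S.card ≤ 5 :=
  stmt_8_general G a b p hlen S hS hdist
end

section
/- Let u_1,…,u_ℓ be a t-clustering of a finite simple unweighted undirected graph G, and let H be a spanning subgraph of G that (a) contains every edge of G_ℓ, (b) contains, for every i ∈ {1,…,ℓ}, every edge of G between u_i and a vertex of C_i \ {u_i}, and (c) satisfies d_H(u_i,u_j) ≤ d_G(u_i,u_j) + 4 for all i, j such that u_i and u_j are connected in G. Then H is an additive 8-spanner of G, i.e., d_H(u,v) ≤ d_G(u,v) + 8 for every pair of vertices u, v connected in G. -/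
open SimpleGraph

/-! Every edge of `G` with an unclustered endpoint lies in `H`, so a shortest `a`–`b` path of `G`
survives in `H` up to its first clustered vertex `x` and, from the other end, up to its last
clustered vertex `y`. If `x ∈ C_i` and `y ∈ C_j`, passing through the centres gives
`d_H(x, y) ≤ 1 + d_H(u_i, u_j) + 1 ≤ 2 + (d_G(x, y) + 2) + 4`. -/

namespace SimpleGraph

variable {V : Type*} {G H : SimpleGraph V} {S : Set V}

lemma edist_triangle4_s9 (a b c d : V) : G.edist a d ≤ G.edist a b + G.edist b c + G.edist c d :=
  G.edist_triangle.trans (add_le_add_left G.edist_triangle _)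

lemma Walk.edist_le_length_or_exists_mem (hS : ∀ x y, G.Adj x y → x ∉ S → H.Adj x y)
    {a b : V} (p : G.Walk a b) :
    H.edist a b ≤ p.length ∨ ∃ x ∈ S, H.edist a x + G.edist x b ≤ p.length := by
  induction p with
  | nil => exact Or.inl (by simp)
  | @cons a c b hac q ih =>
    by_cases ha : a ∈ S
    · exact Or.inr ⟨a, ha, by simpa using G.edist_le (.cons hac q)⟩
    have hH : H.edist a c ≤ 1 := (edist_eq_one_iff_adj.mpr (hS a c hac ha)).le
    rw [Walk.length_cons, Nat.cast_succ, add_comm]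
    rcases ih with hq | ⟨x, hx, hq⟩
    · exact Or.inl (H.edist_triangle.trans (add_le_add hH hq))
    · refine Or.inr ⟨x, hx, ?_⟩
      calc H.edist a x + G.edist x b ≤ H.edist a c + (H.edist c x + G.edist x b) := by
            rw [← add_assoc]; gcongr; exact H.edist_triangle
        _ ≤ 1 + q.length := add_le_add hH hq

lemma edist_le_or_exists_mem (hS : ∀ x y, G.Adj x y → x ∉ S → H.Adj x y) (a b : V) :
    H.edist a b ≤ G.edist a b ∨ ∃ x ∈ S, H.edist a x + G.edist x b ≤ G.edist a b := by
  by_cases hab : G.Reachable a b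
  · obtain ⟨p, hp⟩ := exists_walk_of_edist_ne_top (edist_ne_top_iff_reachable.mpr hab)
    rw [← hp]
    exact p.edist_le_length_or_exists_mem hS
  · exact Or.inl (edist_eq_top_of_not_reachable hab ▸ le_top)

theorem edist_le_edist_add_of_forall_mem (hS : ∀ x y, G.Adj x y → x ∉ S → H.Adj x y) {k : ℕ∞}
    (hSS : ∀ x ∈ S, ∀ y ∈ S, H.edist x y ≤ G.edist x y + k) (a b : V) :
    H.edist a b ≤ G.edist a b + k := by
  rcases edist_le_or_exists_mem hS a b with hab | ⟨x, hx, hax⟩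
  · exact hab.trans le_self_add
  rcases edist_le_or_exists_mem hS b x with hbx | ⟨y, hy, hby⟩
  · calc H.edist a b ≤ H.edist a x + H.edist b x := by
          rw [H.edist_comm (u := b)]; exact H.edist_triangle
      _ ≤ H.edist a x + G.edist x b := by rw [G.edist_comm (u := x)]; gcongr
      _ ≤ G.edist a b + k := hax.trans le_self_add
  · calc H.edist a b ≤ H.edist a x + H.edist x y + H.edist b y := by
          rw [H.edist_comm (u := b)]
          exact H.edist_triangle4_s9 _ _ _ _
      _ ≤ H.edist a x + (G.edist x y + k) + H.edist b y := by gcongr; exact hSS x hx y hy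
      _ = H.edist a x + (H.edist b y + G.edist y x) + k := by rw [G.edist_comm (u := x)]; ring
      _ ≤ H.edist a x + G.edist x b + k := by rw [G.edist_comm (u := x)]; gcongr
      _ ≤ G.edist a b + k := by gcongr

end SimpleGraph

section Clustering

variable {V : Type*} [Fintype V] [DecidableEq V] {G : SimpleGraph V} [DecidableRel G.Adj]
  {u : ℕ → V}

lemma exists_mem_cluster_of_mem_clustered {x : V} {n : ℕ} (hx : x ∈ clustered G u n) :
    ∃ i < n, x ∈ cluster G u i := by
  induction n with
  | zero => simp [clustered] at hx
  | succ n ih =>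
    by_cases hn : x ∈ clustered G u n
    · obtain ⟨i, hi, hxi⟩ := ih hn
      exact ⟨i, hi.trans n.lt_succ_self, hxi⟩
    · rw [clustered, Finset.mem_union, or_iff_right hn] at hx
      exact ⟨n, n.lt_succ_self, Finset.mem_sdiff.mpr ⟨hx, hn⟩⟩

lemma edist_le_one_of_mem_cluster {x : V} {i : ℕ} (hx : x ∈ cluster G u i) :
    G.edist (u i) x ≤ 1 := by
  have hx := (Finset.mem_sdiff.mp hx).1
  rw [closedNbhd, Finset.mem_insert, mem_neighborFinset] at hx
  exact edist_le_one_iff_adj_or_eq.mpr (hx.imp_left Eq.symm).symm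

lemma edist_le_edist_add_eight_of_mem_clustered {H : SimpleGraph V} {ℓ : ℕ}
    (hb : ∀ i < ℓ, ∀ x ∈ cluster G u i, x ≠ u i → H.Adj (u i) x)
    (hc : ∀ i < ℓ, ∀ j < ℓ, G.Reachable (u i) (u j) →
      H.edist (u i) (u j) ≤ G.edist (u i) (u j) + 4)
    {x y : V} (hx : x ∈ clustered G u ℓ) (hy : y ∈ clustered G u ℓ) :
    H.edist x y ≤ G.edist x y + 8 := by
  obtain ⟨i, hi, hxi⟩ := exists_mem_cluster_of_mem_clustered hx
  obtain ⟨j, hj, hyj⟩ := exists_mem_cluster_of_mem_clustered hy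
  have hH : ∀ k < ℓ, ∀ z ∈ cluster G u k, H.edist (u k) z ≤ 1 := fun k hk z hz =>
    edist_le_one_iff_adj_or_eq.mpr <|
      (eq_or_ne z (u k)).elim (Or.inr ∘ Eq.symm) (Or.inl ∘ hb k hk z hz)
  have hGx := edist_le_one_of_mem_cluster hxi
  have hGy := edist_le_one_of_mem_cluster hyj
  by_cases hxy : G.Reachable x y
  swap
  · simp [edist_eq_top_of_not_reachable hxy]
  have hreach : G.Reachable (u i) (u j) :=
    (reachable_of_edist_ne_top (ne_top_of_le_ne_top ENat.one_ne_top hGx)).trans <|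
      hxy.trans (reachable_of_edist_ne_top (ne_top_of_le_ne_top ENat.one_ne_top hGy)).symm
  calc H.edist x y ≤ H.edist (u i) x + H.edist (u i) (u j) + H.edist (u j) y := by
        rw [H.edist_comm (v := x)]
        exact H.edist_triangle4_s9 _ _ _ _
    _ ≤ 1 + (G.edist (u i) (u j) + 4) + 1 := by
        gcongr
        exacts [hH i hi x hxi, hc i hi j hj hreach, hH j hj y hyj]
    _ ≤ 1 + (G.edist (u i) x + G.edist x y + G.edist (u j) y + 4) + 1 := by
        rw [G.edist_comm (u := u j)]
        gcongr
        exact G.edist_triangle4_s9 _ _ _ _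
    _ ≤ 1 + (1 + G.edist x y + 1 + 4) + 1 := by gcongr
    _ = G.edist x y + 8 := by ring

end Clustering

theorem stmt_9_general {V : Type*} [Fintype V] [DecidableEq V] (G : SimpleGraph V)
    [DecidableRel G.Adj] (ℓ : ℕ) (u : ℕ → V)
    (H : SimpleGraph V)
    (ha : level G u ℓ ≤ H)
    (hb : ∀ i < ℓ, ∀ x ∈ cluster G u i, x ≠ u i → H.Adj (u i) x)
    (hc : ∀ i < ℓ, ∀ j < ℓ, G.Reachable (u i) (u j) →
      H.edist (u i) (u j) ≤ G.edist (u i) (u j) + 4) :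
    ∀ a b : V, G.Reachable a b → H.edist a b ≤ G.edist a b + 8 := fun a b _ =>
  edist_le_edist_add_of_forall_mem (S := ↑(clustered G u ℓ))
    (fun _ _ hxy hx => ha ⟨hxy, fun h => hx h.1⟩)
    (fun _ hx _ hy => edist_le_edist_add_eight_of_mem_clustered hb hc hx hy) a b

/-- Let `u 0, …, u (ℓ-1)` be a `t`-clustering of a finite graph `G`, and let `H` be a
spanning subgraph of `G` that (a) contains every edge of `G_ℓ`, (b) contains, for every
`i < ℓ`, every edge of `G` between `u i` and a vertex of `C_i \ {u i}`, and
(c) satisfies `d_H(u i, u j) ≤ d_G(u i, u j) + 4` for all `i, j` such that `u i` and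
`u j` are connected in `G`.  Then `H` is an additive `8`-spanner of `G`. -/
theorem stmt_9 {V : Type*} [Fintype V] [DecidableEq V] (G : SimpleGraph V)
    [DecidableRel G.Adj] (t ℓ : ℕ) (u : ℕ → V) (h : IsClustering G t ℓ u)
    (H : SimpleGraph V) (hHG : H ≤ G)
    (ha : level G u ℓ ≤ H)
    (hb : ∀ i < ℓ, ∀ x ∈ cluster G u i, x ≠ u i → H.Adj (u i) x)
    (hc : ∀ i < ℓ, ∀ j < ℓ, G.Reachable (u i) (u j) →
      H.edist (u i) (u j) ≤ G.edist (u i) (u j) + 4) :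
    ∀ a b : V, G.Reachable a b → H.edist a b ≤ G.edist a b + 8 :=
  stmt_9_general G ℓ u H ha hb hc
end
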